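/- arXiv:2406.05206 — 2 statements merged into one kernel-verified Lean document; each statement's English description precedes it below -/
import Mathlib

section
/- Let X, Y be Banach spaces with a compact embedding ι : Y ↪ X, K a compact metric space, and z ↦ T(z) ∈ L(X, Y) a family of bounded operators with sup_{z ∈ K} ‖T(z)‖_{L(X,Y)} ≤ C < ∞. Let E ⊂ X be a subspace such that every u ∈ E satisfies u = T(z_u) u (viewed in X via ι) for some z_u ∈ K. Then E is finite-dimensional. -/
/-- Let `X, Y` be Banach spaces with a compact embedding `ι : Y ↪ X`, `K` a compact
metric space, and `T : K → L(X,Y)` uniformly bounded.  If `E ⊆ X` is a subspace every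
element of which satisfies `u = ι (T z u)` for some `z ∈ K`, then `E` is
finite-dimensional. -/
theorem finite_dimensional_of_uniform_compact_family
    {X Y : Type*} [NormedAddCommGroup X] [NormedSpace ℂ X] [CompleteSpace X]
    [NormedAddCommGroup Y] [NormedSpace ℂ Y] [CompleteSpace Y]
    (ι : Y →L[ℂ] X) (hι : IsCompactOperator ι)
    {K : Type*} [MetricSpace K] [CompactSpace K]
    (T : K → X →L[ℂ] Y) (C : ℝ) (hT : ∀ z : K, ‖T z‖ ≤ C)
    (E : Submodule ℂ X) (hE : ∀ u ∈ E, ∃ z : K, ι (T z u) = u) :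
    FiniteDimensional ℂ E := by
  by_contra hfin
  obtain ⟨R, f, Rgt, fle, lef⟩ :
      ∃ (R : ℝ) (f : ℕ → E), 1 < R ∧ (∀ n, ‖f n‖ ≤ R) ∧ Pairwise fun m n => 1 ≤ ‖f m - f n‖ :=
    exists_seq_norm_le_one_le_norm_sub hfin
  -- the image of the closed ball of radius C*R in Y is contained in a compact set S
  obtain ⟨S, hS, hSsub⟩ := hι.image_closedBall_subset_compact (𝕜₁ := ℂ) (C * R)
  -- each (f n : X) lies in S
  have hmem : ∀ n, ((f n : X)) ∈ S := by
    intro n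
    obtain ⟨z, hz⟩ := hE (f n) (f n).2
    have hb : T z (f n : X) ∈ Metric.closedBall (0 : Y) (C * R) := by
      rw [Metric.mem_closedBall, dist_zero_right]
      calc ‖T z (f n : X)‖ ≤ ‖T z‖ * ‖(f n : X)‖ := (T z).le_opNorm _
        _ ≤ C * R := by
            have h0 : (0:ℝ) ≤ ‖T z‖ := norm_nonneg _
            have hC : ‖T z‖ ≤ C := hT z
            have hfn : ‖(f n : X)‖ ≤ R := fle n
            exact mul_le_mul hC hfn (norm_nonneg _) (h0.trans hC)
    have : ι (T z (f n : X)) ∈ S := hSsub ⟨_, hb, rfl⟩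
    rwa [hz] at this
  -- extract a convergent subsequence
  obtain ⟨a, _, φ, hφ, hconv⟩ := hS.isSeqCompact (x := fun n => ((f n : X))) hmem
  have hcauchy : CauchySeq (fun n => ((f (φ n) : X))) := hconv.cauchySeq
  rw [Metric.cauchySeq_iff] at hcauchy
  obtain ⟨N, hN⟩ := hcauchy 1 one_pos
  have h1 : (1:ℝ) ≤ ‖f (φ N) - f (φ (N+1))‖ :=
    lef (fun h => by have := hφ.injective h; omega)
  have h2 : dist ((f (φ N) : X)) ((f (φ (N+1)) : X)) < 1 := hN N le_rfl (N+1) (by omega)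
  rw [dist_eq_norm] at h2
  have : ‖f (φ N) - f (φ (N+1))‖ = ‖((f (φ N) : X)) - ((f (φ (N+1)) : X))‖ := rfl
  linarith [this ▸ h1]
end

section
/- Let Q(s) = v_j cosh s − 2∂_{v_j} sinh s + 2(cosh s − 1)∂_{x_j} as an operator on Schwartz functions of (x,v) ∈ ℝ^{2n}. For P₀ = −Δ_v + |v|²/4 − n/2 + v·∇_x, the commutator identity [P₀, Q(s)] = Q'(s) holds on Schwartz functions, where Q'(s) = v_j sinh s − 2∂_{v_j} cosh s + 2 sinh s ∂_{x_j}. -/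
noncomputable section

abbrev Phase (n : ℕ) := EuclideanSpace ℝ (Fin n) × EuclideanSpace ℝ (Fin n)

/-- Partial derivative in `x_i`. -/
def pdx (n : ℕ) (i : Fin n) (f : Phase n → ℂ) (p : Phase n) : ℂ :=
  deriv (fun t : ℝ => f (p.1 + t • EuclideanSpace.single i 1, p.2)) 0

/-- Partial derivative in `v_i`. -/
def pdv (n : ℕ) (i : Fin n) (f : Phase n → ℂ) (p : Phase n) : ℂ :=
  deriv (fun t : ℝ => f (p.1, p.2 + t • EuclideanSpace.single i 1)) 0

/-- Laplacian in the velocity variable. -/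
def lapv (n : ℕ) (f : Phase n → ℂ) (p : Phase n) : ℂ :=
  ∑ i : Fin n, iteratedDeriv 2 (fun t : ℝ => f (p.1, p.2 + t • EuclideanSpace.single i 1)) 0

/-- The free Kramers–Fokker–Planck operator `P₀ = −Δ_v + |v|²/4 − n/2 + v·∇_x`. -/
def KFP0 (n : ℕ) (f : Phase n → ℂ) (p : Phase n) : ℂ :=
  -lapv n f p + ((‖p.2‖ ^ 2 / 4 - n / 2 : ℝ) : ℂ) * f p
    + ∑ i : Fin n, ((p.2 i : ℝ) : ℂ) * pdx n i f p

/-- `Q(s) = v_j cosh s − 2∂_{v_j} sinh s + 2(cosh s − 1)∂_{x_j}`. -/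
def Qop (n : ℕ) (j : Fin n) (s : ℝ) (f : Phase n → ℂ) (q : Phase n) : ℂ :=
  ((Real.cosh s : ℝ) : ℂ) * ((q.2 j : ℝ) : ℂ) * f q
    - 2 * ((Real.sinh s : ℝ) : ℂ) * pdv n j f q
    + 2 * (((Real.cosh s : ℝ) : ℂ) - 1) * pdx n j f q

/-- `Q'(s) = v_j sinh s − 2∂_{v_j} cosh s + 2 sinh s ∂_{x_j}`. -/
def Qop' (n : ℕ) (j : Fin n) (s : ℝ) (f : Phase n → ℂ) (q : Phase n) : ℂ :=
  ((Real.sinh s : ℝ) : ℂ) * ((q.2 j : ℝ) : ℂ) * f q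
    - 2 * ((Real.cosh s : ℝ) : ℂ) * pdv n j f q
    + 2 * ((Real.sinh s : ℝ) : ℂ) * pdx n j f q

/-!
Written with directional derivatives, `P₀ = -∑ᵢ ∂²_{vᵢ} + (|v|²/4 - n/2) + ∑ᵢ vᵢ ∂_{xᵢ}`.
Multiplication by `v_j` fails to commute only with the Laplacian part: `[P₀, v_j] = -2∂_{v_j}`.
For a constant direction `w`, mixed second derivatives of a smooth function commute, so `[P₀, ∂_w]`
only sees the derivatives of the coefficients: `[P₀, ∂_{v_j}] = -v_j/2 - ∂_{x_j}` and
`[P₀, ∂_{x_j}] = 0`. As `Q(s)` is a constant-coefficient combination of `v_j`, `∂_{v_j}`, `∂_{x_j}`,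
`[P₀, Q(s)]` is the same combination of these three commutators, which is `Q'(s)`.
-/

open scoped ContDiff

section DirDeriv

variable {E 𝔸 : Type*} [NormedAddCommGroup E] [NormedSpace ℝ E]
  [NormedCommRing 𝔸] [NormedAlgebra ℝ 𝔸] {a g h : E → 𝔸}

def dirDeriv (u : E) (g : E → 𝔸) : E → 𝔸 := fun p => lineDeriv ℝ g p u

theorem dirDeriv_eq_fderiv (hg : Differentiable ℝ g) (u : E) :
    dirDeriv u g = fun p => fderiv ℝ g p u :=
  funext fun p => (hg p).lineDeriv_eq_fderiv

theorem ContDiff.dirDeriv (hg : ContDiff ℝ ∞ g) (u : E) : ContDiff ℝ ∞ (dirDeriv u g) := by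
  rw [dirDeriv_eq_fderiv (hg.differentiable (by simp))]
  exact (hg.fderiv_right le_rfl).clm_apply contDiff_const

theorem dirDeriv_add (hg : Differentiable ℝ g) (hh : Differentiable ℝ h) (u : E) :
    dirDeriv u (g + h) = dirDeriv u g + dirDeriv u h := by
  simp only [dirDeriv_eq_fderiv (hg.add hh), dirDeriv_eq_fderiv hg, dirDeriv_eq_fderiv hh,
    fderiv_add (hg _) (hh _)]
  rfl

theorem dirDeriv_neg (u : E) : dirDeriv u (-g) = -dirDeriv u g := by
  funext p
  simp [dirDeriv, lineDeriv]

theorem dirDeriv_smul (hg : Differentiable ℝ g) (c : 𝔸) (u : E) :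
    dirDeriv u (c • g) = c • dirDeriv u g := by
  simp only [dirDeriv_eq_fderiv (hg.const_smul c), dirDeriv_eq_fderiv hg,
    fderiv_const_smul (hg _) c]
  rfl

theorem dirDeriv_mul (ha : Differentiable ℝ a) (hg : Differentiable ℝ g) (u : E) :
    dirDeriv u (a * g) = dirDeriv u a * g + a * dirDeriv u g := by
  simp only [dirDeriv_eq_fderiv (ha.mul hg), dirDeriv_eq_fderiv ha, dirDeriv_eq_fderiv hg,
    fderiv_mul (ha _) (hg _)]
  funext p
  simp [mul_comm, add_comm]

theorem dirDeriv_sum {ι : Type*} (s : Finset ι) {g : ι → E → 𝔸}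
    (hg : ∀ i ∈ s, Differentiable ℝ (g i)) (u : E) :
    dirDeriv u (∑ i ∈ s, g i) = ∑ i ∈ s, dirDeriv u (g i) := by
  funext p
  simp only [dirDeriv_eq_fderiv (Differentiable.sum hg), fderiv_sum fun i hi => hg i hi p,
    FunLike.coe_sum, Finset.sum_apply]
  exact Finset.sum_congr rfl fun i hi => (congrFun (dirDeriv_eq_fderiv (hg i hi) u) p).symm

theorem dirDeriv_comm (hg : ContDiff ℝ 2 g) (u w : E) :
    dirDeriv u (dirDeriv w g) = dirDeriv w (dirDeriv u g) := by
  have hd : Differentiable ℝ g := hg.differentiable (by simp)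
  have hdd : Differentiable ℝ (fderiv ℝ g) :=
    (hg.fderiv_right (m := 1) le_rfl).differentiable one_ne_zero
  have key : ∀ u w : E, dirDeriv u (dirDeriv w g) = fun p => fderiv ℝ (fderiv ℝ g) p u w := by
    intro u w
    have hw : Differentiable ℝ (dirDeriv w g) := by
      rw [dirDeriv_eq_fderiv hd]; exact hdd.clm_apply (differentiable_const w)
    rw [dirDeriv_eq_fderiv hw, dirDeriv_eq_fderiv hd]
    funext p
    rw [fderiv_clm_apply (hdd p) (differentiableAt_const w)]
    simp
  rw [key, key]
  funext p
  exact (hg.contDiffAt.isSymmSndFDerivAt (by simp)).eq u w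

theorem deriv_comp_add_smul (hg : Differentiable ℝ g) (p u : E) :
    deriv (fun t : ℝ => g (p + t • u)) = fun t => dirDeriv u g (p + t • u) := by
  funext t
  have hline : HasDerivAt (fun t : ℝ => p + t • u) u t := by
    simpa using ((hasDerivAt_id t).smul_const u).const_add p
  rw [dirDeriv_eq_fderiv hg]
  exact ((hg _).hasFDerivAt.comp_hasDerivAt t hline).deriv

theorem iteratedDeriv_two_comp_add_smul (hg : Differentiable ℝ g) (p u : E) :
    iteratedDeriv 2 (fun t : ℝ => g (p + t • u)) 0 = dirDeriv u (dirDeriv u g) p := by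
  rw [iteratedDeriv_succ, iteratedDeriv_one, deriv_comp_add_smul hg]
  rfl

end DirDeriv

section Phase

variable {n : ℕ} {g h : Phase n → ℂ}

def xUnit (i : Fin n) : Phase n := (EuclideanSpace.single i 1, 0)

def vUnit (i : Fin n) : Phase n := (0, EuclideanSpace.single i 1)

def vCoord (j : Fin n) : Phase n → ℂ := fun q => ((q.2 j : ℝ) : ℂ)

def potential (n : ℕ) : Phase n → ℂ := fun q => ((‖q.2‖ ^ 2 / 4 - n / 2 : ℝ) : ℂ)

theorem add_smul_xUnit (p : Phase n) (t : ℝ) (i : Fin n) :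
    p + t • xUnit i = (p.1 + t • EuclideanSpace.single i 1, p.2) := by
  simp [xUnit, Prod.ext_iff]

theorem add_smul_vUnit (p : Phase n) (t : ℝ) (i : Fin n) :
    p + t • vUnit i = (p.1, p.2 + t • EuclideanSpace.single i 1) := by
  simp [vUnit, Prod.ext_iff]

theorem pdx_eq_dirDeriv (i : Fin n) (g : Phase n → ℂ) : pdx n i g = dirDeriv (xUnit i) g := by
  funext p
  simp only [pdx, dirDeriv, lineDeriv, add_smul_xUnit]

theorem pdv_eq_dirDeriv (i : Fin n) (g : Phase n → ℂ) : pdv n i g = dirDeriv (vUnit i) g := by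
  funext p
  simp only [pdv, dirDeriv, lineDeriv, add_smul_vUnit]

theorem lapv_eq_sum (hg : Differentiable ℝ g) :
    lapv n g = ∑ i, dirDeriv (vUnit i) (dirDeriv (vUnit i) g) := by
  funext p
  simp only [lapv, Finset.sum_apply, ← iteratedDeriv_two_comp_add_smul hg, add_smul_vUnit]

theorem KFP0_eq (hg : Differentiable ℝ g) :
    KFP0 n g = -∑ i, dirDeriv (vUnit i) (dirDeriv (vUnit i) g) + potential n * g
      + ∑ i, vCoord i * dirDeriv (xUnit i) g := by
  funext p
  simp [KFP0, lapv_eq_sum hg, pdx_eq_dirDeriv, potential, vCoord]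

theorem contDiff_vCoord (j : Fin n) : ContDiff ℝ ∞ (vCoord j) :=
  Complex.ofRealCLM.contDiff.comp ((EuclideanSpace.proj (𝕜 := ℝ) j).contDiff.comp contDiff_snd)

theorem contDiff_potential : ContDiff ℝ ∞ (potential n) :=
  Complex.ofRealCLM.contDiff.comp
    ((((contDiff_norm_sq ℝ).comp contDiff_snd).div_const 4).sub contDiff_const)

theorem dirDeriv_vCoord (u : Phase n) (j : Fin n) :
    dirDeriv u (vCoord j) = ((u.2 j : ℝ) : ℂ) • 1 := by
  funext p
  have hline : HasDerivAt (fun t : ℝ => p.2 j + t * u.2 j) (u.2 j) 0 := by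
    simpa using ((hasDerivAt_id (0 : ℝ)).mul_const (u.2 j)).const_add (p.2 j)
  simpa [dirDeriv, lineDeriv, vCoord] using hline.ofReal_comp.deriv

theorem dirDeriv_potential (u : Phase n) :
    dirDeriv u (potential n) = fun q => ((inner ℝ q.2 u.2 / 2 : ℝ) : ℂ) := by
  funext p
  have hline : HasDerivAt (fun t : ℝ => p.2 + t • u.2) u.2 0 := by
    simpa using ((hasDerivAt_id (0 : ℝ)).smul_const u.2).const_add p.2
  have hnorm := ((hline.norm_sq.div_const 4).sub_const ((n : ℝ) / 2)).ofReal_comp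
  simp only [zero_smul, add_zero] at hnorm
  simp only [dirDeriv, lineDeriv, potential, Prod.snd_add, Prod.smul_snd, hnorm.deriv]
  push_cast
  ring

theorem dirDeriv_vCoord_mul (hg : Differentiable ℝ g) (u : Phase n) (j : Fin n) :
    dirDeriv u (vCoord j * g) = ((u.2 j : ℝ) : ℂ) • g + vCoord j * dirDeriv u g := by
  rw [dirDeriv_mul ((contDiff_vCoord j).differentiable (by simp)) hg, dirDeriv_vCoord,
    smul_one_mul]

theorem KFP0_add (hg : ContDiff ℝ ∞ g) (hh : ContDiff ℝ ∞ h) :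
    KFP0 n (g + h) = KFP0 n g + KFP0 n h := by
  have hg' := hg.differentiable (by simp)
  have hh' := hh.differentiable (by simp)
  have hdg := fun u => (hg.dirDeriv u).differentiable (by simp)
  have hdh := fun u => (hh.dirDeriv u).differentiable (by simp)
  rw [KFP0_eq (hg'.add hh'), KFP0_eq hg', KFP0_eq hh']
  simp only [dirDeriv_add hg' hh', fun u => dirDeriv_add (hdg u) (hdh u), Finset.sum_add_distrib,
    mul_add]
  ring

theorem KFP0_smul (hg : ContDiff ℝ ∞ g) (c : ℂ) : KFP0 n (c • g) = c • KFP0 n g := by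
  have hg' := hg.differentiable (by simp)
  have hdg := fun u => (hg.dirDeriv u).differentiable (by simp)
  rw [KFP0_eq (hg'.const_smul c), KFP0_eq hg']
  simp only [dirDeriv_smul hg', fun u => dirDeriv_smul (hdg u), Finset.smul_sum, mul_smul_comm,
    smul_add, smul_neg]

theorem vUnit_snd_apply (i j : Fin n) : (vUnit i).2 j = if j = i then 1 else 0 := by
  simp [vUnit]

theorem xUnit_snd (i : Fin n) : (xUnit i).2 = 0 := rfl

theorem dirDeriv_dirDeriv_vCoord_mul (hg : ContDiff ℝ ∞ g) (u : Phase n) (j : Fin n) :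
    dirDeriv u (dirDeriv u (vCoord j * g))
      = (2 * ((u.2 j : ℝ) : ℂ)) • dirDeriv u g + vCoord j * dirDeriv u (dirDeriv u g) := by
  have hg' := hg.differentiable (by simp)
  have hv := (contDiff_vCoord j).differentiable (by simp)
  rw [dirDeriv_vCoord_mul hg', dirDeriv_add (hg'.const_smul _)
    (hv.mul ((hg.dirDeriv u).differentiable (by simp))), dirDeriv_smul hg',
    dirDeriv_vCoord_mul ((hg.dirDeriv u).differentiable (by simp))]
  module

theorem KFP0_vCoord_mul (hg : ContDiff ℝ ∞ g) (j : Fin n) :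
    KFP0 n (vCoord j * g) = vCoord j * KFP0 n g - (2 : ℂ) • dirDeriv (vUnit j) g := by
  have hg' := hg.differentiable (by simp)
  have hv := (contDiff_vCoord j).differentiable (by simp)
  rw [KFP0_eq (hv.mul hg'), KFP0_eq hg']
  simp only [dirDeriv_dirDeriv_vCoord_mul hg]
  simp only [dirDeriv_vCoord_mul hg', Finset.sum_add_distrib, vUnit_snd_apply, xUnit_snd,
    PiLp.zero_apply, Complex.ofReal_zero, zero_smul, zero_add, apply_ite, Complex.ofReal_one,
    mul_zero, mul_one, ite_smul, two_smul, Finset.sum_ite_eq, Finset.mem_univ, if_true]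
  simp only [mul_add, mul_neg, Finset.mul_sum, mul_left_comm (vCoord j)]
  ring

theorem KFP0_dirDeriv (hg : ContDiff ℝ ∞ g) (w : Phase n) :
    KFP0 n (dirDeriv w g) = dirDeriv w (KFP0 n g) - dirDeriv w (potential n) * g
      - ∑ i, ((w.2 i : ℝ) : ℂ) • dirDeriv (xUnit i) g := by
  have d : ∀ {F : Phase n → ℂ}, ContDiff ℝ ∞ F → Differentiable ℝ F :=
    fun hF => hF.differentiable (by simp)
  have hlap : ∀ i ∈ Finset.univ, Differentiable ℝ (dirDeriv (vUnit i) (dirDeriv (vUnit i) g)) :=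
    fun i _ => d ((hg.dirDeriv _).dirDeriv _)
  have hpot : Differentiable ℝ (potential n * g) := d (contDiff_potential.mul hg)
  have htrans : ∀ i ∈ Finset.univ, Differentiable ℝ (vCoord i * dirDeriv (xUnit i) g) :=
    fun i _ => d ((contDiff_vCoord i).mul (hg.dirDeriv _))
  have hcomm : ∀ u, dirDeriv w (dirDeriv u g) = dirDeriv u (dirDeriv w g) :=
    fun u => dirDeriv_comm (hg.of_le (by norm_cast)) w u
  have hcomm₂ : ∀ u, dirDeriv w (dirDeriv u (dirDeriv u g))
      = dirDeriv u (dirDeriv u (dirDeriv w g)) := fun u => by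
    rw [dirDeriv_comm ((hg.dirDeriv u).of_le (by norm_cast)) w u, hcomm u]
  rw [KFP0_eq (d (hg.dirDeriv w)), KFP0_eq (d hg),
    dirDeriv_add ((Differentiable.sum hlap).neg.add hpot) (Differentiable.sum htrans),
    dirDeriv_add (Differentiable.sum hlap).neg hpot, dirDeriv_neg, dirDeriv_sum _ hlap,
    dirDeriv_sum _ htrans, dirDeriv_mul (d contDiff_potential) (d hg)]
  simp only [dirDeriv_vCoord_mul (d (hg.dirDeriv _)), Finset.sum_add_distrib, hcomm₂,
    fun i => hcomm (xUnit i)]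
  ring

theorem KFP0_sub (hg : ContDiff ℝ ∞ g) (hh : ContDiff ℝ ∞ h) :
    KFP0 n (g - h) = KFP0 n g - KFP0 n h := by
  have hh' : ContDiff ℝ ∞ ((-1 : ℂ) • h) := hh.const_smul (-1 : ℂ)
  rw [sub_eq_add_neg, ← neg_one_smul ℂ h, KFP0_add hg hh', KFP0_smul hh,
    neg_one_smul, ← sub_eq_add_neg]

theorem KFP0_dirDeriv_vUnit (hg : ContDiff ℝ ∞ g) (j : Fin n) :
    KFP0 n (dirDeriv (vUnit j) g)
      = dirDeriv (vUnit j) (KFP0 n g) - (1 / 2 : ℂ) • (vCoord j * g) - dirDeriv (xUnit j) g := by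
  have hpot : dirDeriv (vUnit j) (potential n) = (1 / 2 : ℂ) • vCoord j := by
    funext q
    simp [dirDeriv_potential, vUnit, vCoord, EuclideanSpace.inner_single_right, div_eq_inv_mul]
  rw [KFP0_dirDeriv hg, hpot, smul_mul_assoc]
  simp [vUnit_snd_apply]

theorem KFP0_dirDeriv_xUnit (hg : ContDiff ℝ ∞ g) (j : Fin n) :
    KFP0 n (dirDeriv (xUnit j) g) = dirDeriv (xUnit j) (KFP0 n g) := by
  have hpot : dirDeriv (xUnit j) (potential n) = 0 := by
    funext q
    simp [dirDeriv_potential, xUnit_snd]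
  rw [KFP0_dirDeriv hg, hpot]
  simp [xUnit_snd]

theorem Qop_eq (j : Fin n) (s : ℝ) (g : Phase n → ℂ) :
    Qop n j s g = (Real.cosh s : ℂ) • (vCoord j * g)
      - (2 * Real.sinh s : ℂ) • dirDeriv (vUnit j) g
      + (2 * (Real.cosh s - 1) : ℂ) • dirDeriv (xUnit j) g := by
  funext q
  simp [Qop, pdv_eq_dirDeriv, pdx_eq_dirDeriv, vCoord, mul_assoc]

theorem Qop'_eq (j : Fin n) (s : ℝ) (g : Phase n → ℂ) :
    Qop' n j s g = (Real.sinh s : ℂ) • (vCoord j * g)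
      - (2 * Real.cosh s : ℂ) • dirDeriv (vUnit j) g
      + (2 * Real.sinh s : ℂ) • dirDeriv (xUnit j) g := by
  funext q
  simp [Qop', pdv_eq_dirDeriv, pdx_eq_dirDeriv, vCoord, mul_assoc]

theorem KFP0_Qop_sub_Qop_KFP0 (hg : ContDiff ℝ ∞ g) (j : Fin n) (s : ℝ) :
    KFP0 n (Qop n j s g) - Qop n j s (KFP0 n g) = Qop' n j s g := by
  have hv : ContDiff ℝ ∞ (vCoord j * g) := (contDiff_vCoord j).mul hg
  have hdv := hg.dirDeriv (vUnit j)
  have hdx := hg.dirDeriv (xUnit j)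
  have h₁ : ContDiff ℝ ∞ ((Real.cosh s : ℂ) • (vCoord j * g)) :=
    hv.const_smul (Real.cosh s : ℂ)
  have h₂ : ContDiff ℝ ∞ ((2 * Real.sinh s : ℂ) • dirDeriv (vUnit j) g) :=
    hdv.const_smul (2 * Real.sinh s : ℂ)
  have h₃ : ContDiff ℝ ∞ ((2 * (Real.cosh s - 1) : ℂ) • dirDeriv (xUnit j) g) :=
    hdx.const_smul (2 * (Real.cosh s - 1) : ℂ)
  have h₁₂ : ContDiff ℝ ∞ ((Real.cosh s : ℂ) • (vCoord j * g)
      - (2 * Real.sinh s : ℂ) • dirDeriv (vUnit j) g) := h₁.sub h₂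
  rw [Qop_eq, Qop_eq, Qop'_eq, KFP0_add h₁₂ h₃, KFP0_sub h₁ h₂, KFP0_smul hv, KFP0_smul hdv,
    KFP0_smul hdx, KFP0_vCoord_mul hg, KFP0_dirDeriv_vUnit hg, KFP0_dirDeriv_xUnit hg]
  module

end Phase

/-- The commutator identity `[P₀, Q(s)] = Q'(s)` on Schwartz functions. -/
theorem commutator_P0_Q (n : ℕ) (j : Fin n) (s : ℝ) (f : SchwartzMap (Phase n) ℂ)
    (p : Phase n) :
    KFP0 n (Qop n j s (⇑f)) p - Qop n j s (KFP0 n (⇑f)) p = Qop' n j s (⇑f) p :=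
  congrFun (KFP0_Qop_sub_Qop_KFP0 (f.smooth ⊤) j s) p

end
end
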